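/- arXiv:0811.3551 — 6 statements merged into one kernel-verified Lean document; each statement's English description precedes it below -/
import Mathlib

section
/- Let S ⊂ ℝ be a subring that is finitely generated as a ℤ-module, and let Γ₁, Γ₂ ⊂ ℝⁿ be free S-modules of rank n each spanning ℝⁿ, with basis matrices B₁, B₂ ∈ GL(n,ℝ). If Γ₁ and Γ₂ are commensurate, then Γ₁ ∩ Γ₂ contains a free S-module of rank n that spans ℝⁿ. -/
/-- Two additive subgroups of `ℝⁿ` are commensurate if their intersection has
finite index in both. -/
def Commensurate {n : ℕ} (Γ Γ' : AddSubgroup (Fin n → ℝ)) : Prop :=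
  (Γ'.addSubgroupOf Γ).index ≠ 0 ∧ (Γ.addSubgroupOf Γ').index ≠ 0

/-- `B` is a basis matrix of `Γ`: `B` is invertible (its columns form an
`ℝ`-basis of `ℝⁿ`) and `Γ` is the `S`-span of the columns of `B`, i.e. `Γ` is a
free `S`-module of rank `n` spanning `ℝⁿ`. -/
def IsBasisMatrixOf {n : ℕ} (S : Subring ℝ) (B : Matrix (Fin n) (Fin n) ℝ)
    (Γ : AddSubgroup (Fin n → ℝ)) : Prop :=
  IsUnit B.det ∧ ∀ x, x ∈ Γ ↔ ∃ c : Fin n → ℝ, (∀ i, c i ∈ S) ∧ x = B.mulVec c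

theorem IsBasisMatrixOf.mulVec_mem {n : ℕ} {S : Subring ℝ} {B : Matrix (Fin n) (Fin n) ℝ}
    {Γ : AddSubgroup (Fin n → ℝ)} (hB : IsBasisMatrixOf S B Γ) {c : Fin n → ℝ}
    (hc : ∀ i, c i ∈ S) : B.mulVec c ∈ Γ :=
  (hB.2 _).2 ⟨c, hc, rfl⟩

theorem stmt8_general {n : ℕ} (S : Subring ℝ)
    (Γ₁ Γ₂ : AddSubgroup (Fin n → ℝ)) (B₁ : Matrix (Fin n) (Fin n) ℝ)
    (h₁ : IsBasisMatrixOf S B₁ Γ₁)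
    (h : Commensurate Γ₁ Γ₂) :
    ∃ B : Matrix (Fin n) (Fin n) ℝ, IsUnit B.det ∧
      ∀ c : Fin n → ℝ, (∀ i, c i ∈ S) → B.mulVec c ∈ Γ₁ ⊓ Γ₂ := by
  -- The index `m` of `Γ₁ ⊓ Γ₂` in `Γ₁` annihilates the finite quotient, so `m • Γ₁ ⊆ Γ₁ ⊓ Γ₂`.
  have hm : ((Γ₂.relIndex Γ₁ : ℕ) : ℝ) ≠ 0 := Nat.cast_ne_zero.2 h.1
  refine ⟨(Γ₂.relIndex Γ₁ : ℝ) • B₁, ?_, fun c hc => ?_⟩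
  · rw [Matrix.det_smul]
    exact (hm.isUnit.pow _).mul h₁.1
  · have hx := h₁.mulVec_mem hc
    rw [Matrix.smul_mulVec, Nat.cast_smul_eq_nsmul]
    exact ⟨Γ₁.nsmul_mem hx _, Γ₂.nsmul_relIndex_mem hx⟩

theorem stmt8 {n : ℕ} (S : Subring ℝ) (hS : Module.Finite ℤ S)
    (Γ₁ Γ₂ : AddSubgroup (Fin n → ℝ)) (B₁ B₂ : Matrix (Fin n) (Fin n) ℝ)
    (h₁ : IsBasisMatrixOf S B₁ Γ₁) (h₂ : IsBasisMatrixOf S B₂ Γ₂)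
    (h : Commensurate Γ₁ Γ₂) :
    ∃ B : Matrix (Fin n) (Fin n) ℝ, IsUnit B.det ∧
      ∀ c : Fin n → ℝ, (∀ i, c i ∈ S) → B.mulVec c ∈ Γ₁ ⊓ Γ₂ :=
  stmt8_general S Γ₁ Γ₂ B₁ h₁ h
end

section
/- Let S ⊂ ℝ be a subring finitely generated as a ℤ-module with field of fractions K in ℝ, and let Γ₁, Γ₂ ⊂ ℝⁿ be free S-modules of rank n spanning ℝⁿ with basis matrices B₁, B₂ ∈ GL(n,ℝ). If Γ₁ ∩ Γ₂ contains a free S-module of rank n that spans ℝⁿ, then B₂⁻¹B₁ ∈ GL(n,K). -/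
open Matrix

section

variable {n : Type*} [Fintype n] [DecidableEq n]

theorem Matrix.inv_mul_eq_mul_inv_of_mul_eq_mul {α : Type*} [CommRing α]
    {A₁ A₂ D₁ D₂ : Matrix n n α} (hA₂ : IsUnit A₂.det) (hD₁ : IsUnit D₁.det)
    (h : A₁ * D₁ = A₂ * D₂) : A₂⁻¹ * A₁ = D₂ * D₁⁻¹ := by
  calc A₂⁻¹ * A₁ = A₂⁻¹ * (A₁ * D₁) * D₁⁻¹ := by
        rw [Matrix.mul_assoc, Matrix.mul_assoc, mul_nonsing_inv _ hD₁, Matrix.mul_one]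
    _ = D₂ * D₁⁻¹ := by rw [h, ← Matrix.mul_assoc, nonsing_inv_mul _ hA₂, Matrix.one_mul]

theorem RingHom.mapMatrix_mul_inv_apply {R F : Type*} [CommRing R] [Field F] (f : R →+* F)
    (C₁ C₂ : Matrix n n R) (i j : n) :
    (f.mapMatrix C₂ * (f.mapMatrix C₁)⁻¹) i j = f ((C₂ * C₁.adjugate) i j) / f C₁.det := by
  rw [inv_def, Ring.inverse_eq_inv', ← f.map_det, ← f.map_adjugate, Matrix.mul_smul,
    Matrix.smul_apply, smul_eq_mul, ← map_mul, div_eq_inv_mul]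
  rfl

end

theorem IsBasisMatrixOf.exists_eq_mul_mapMatrix {m : ℕ} {S : Subring ℝ}
    {B₁ B : Matrix (Fin m) (Fin m) ℝ} {Γ : AddSubgroup (Fin m → ℝ)}
    (h₁ : IsBasisMatrixOf S B₁ Γ) (hB : ∀ c : Fin m → ℝ, (∀ i, c i ∈ S) → B *ᵥ c ∈ Γ) :
    ∃ C : Matrix (Fin m) (Fin m) S, B = B₁ * S.subtype.mapMatrix C := by
  have hcol (j : Fin m) : ∃ c : Fin m → ℝ, (∀ i, c i ∈ S) ∧ B *ᵥ Pi.single j 1 = B₁ *ᵥ c := by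
    refine (h₁.2 _).mp (hB _ fun i => ?_)
    rcases eq_or_ne i j with rfl | hij
    · simp [S.one_mem]
    · simp [Pi.single_eq_of_ne hij, S.zero_mem]
  choose c hcS hc using hcol
  refine ⟨of fun i j => ⟨c j i, hcS j i⟩, ?_⟩
  ext i j
  have hij := congrFun (hc j) i
  rw [mulVec_single_one] at hij
  simpa [Matrix.mul_apply, mulVec, dotProduct] using hij

theorem stmt9_general {n : ℕ} (S : Subring ℝ)
    (K : Subfield ℝ)
    (hK : ∀ x : ℝ, x ∈ K ↔ ∃ a b : ℝ, a ∈ S ∧ b ∈ S ∧ b ≠ 0 ∧ x = a / b)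
    (Γ₁ Γ₂ : AddSubgroup (Fin n → ℝ)) (B₁ B₂ : Matrix (Fin n) (Fin n) ℝ)
    (h₁ : IsBasisMatrixOf S B₁ Γ₁) (h₂ : IsBasisMatrixOf S B₂ Γ₂)
    (h : ∃ B : Matrix (Fin n) (Fin n) ℝ, IsUnit B.det ∧
      ∀ c : Fin n → ℝ, (∀ i, c i ∈ S) → B.mulVec c ∈ Γ₁ ⊓ Γ₂) :
    (∀ i j, (B₂⁻¹ * B₁) i j ∈ K) ∧ IsUnit (B₂⁻¹ * B₁).det := by
  obtain ⟨B, hBdet, hB⟩ := h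
  obtain ⟨C₁, hB₁⟩ := h₁.exists_eq_mul_mapMatrix fun c hc => (hB c hc).1
  obtain ⟨C₂, hB₂⟩ := h₂.exists_eq_mul_mapMatrix fun c hc => (hB c hc).2
  have hD₁ : IsUnit (S.subtype.mapMatrix C₁).det :=
    isUnit_of_mul_isUnit_right (by rwa [← det_mul, ← hB₁])
  have hquot : B₂⁻¹ * B₁ = S.subtype.mapMatrix C₂ * (S.subtype.mapMatrix C₁)⁻¹ :=
    inv_mul_eq_mul_inv_of_mul_eq_mul h₂.1 hD₁ (hB₁.symm.trans hB₂)
  refine ⟨fun i j => ?_, by rw [det_mul]; exact (isUnit_nonsing_inv_det _ h₂.1).mul h₁.1⟩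
  rw [hquot, S.subtype.mapMatrix_mul_inv_apply, hK]
  refine ⟨_, _, SetLike.coe_mem _, SetLike.coe_mem _, ?_, rfl⟩
  exact fun hdet => hD₁.ne_zero (by rw [← RingHom.map_det]; exact hdet)

theorem stmt9 {n : ℕ} (S : Subring ℝ) (hS : Module.Finite ℤ S)
    (K : Subfield ℝ)
    (hK : ∀ x : ℝ, x ∈ K ↔ ∃ a b : ℝ, a ∈ S ∧ b ∈ S ∧ b ≠ 0 ∧ x = a / b)
    (Γ₁ Γ₂ : AddSubgroup (Fin n → ℝ)) (B₁ B₂ : Matrix (Fin n) (Fin n) ℝ)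
    (h₁ : IsBasisMatrixOf S B₁ Γ₁) (h₂ : IsBasisMatrixOf S B₂ Γ₂)
    (h : ∃ B : Matrix (Fin n) (Fin n) ℝ, IsUnit B.det ∧
      ∀ c : Fin n → ℝ, (∀ i, c i ∈ S) → B.mulVec c ∈ Γ₁ ⊓ Γ₂) :
    (∀ i j, (B₂⁻¹ * B₁) i j ∈ K) ∧ IsUnit (B₂⁻¹ * B₁).det :=
  stmt9_general S K hK Γ₁ Γ₂ B₁ B₂ h₁ h₂ h
end

section
/- Let S ⊂ ℝ be a subring finitely generated as a ℤ-module with field of fractions K in ℝ, and let Γ₁, Γ₂ ⊂ ℝⁿ be free S-modules of rank n spanning ℝⁿ with basis matrices B₁, B₂ ∈ GL(n,ℝ). If B₂⁻¹B₁ ∈ GL(n,K), then Γ₁ and Γ₂ are commensurate as additive subgroups of ℝⁿ. -/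
/-!
The entries of `M = B₂⁻¹ B₁` are fractions over `S`, so some nonzero `d ∈ S` clears all their
denominators. Since `S` is a finitely generated `ℤ`-module, `d` is integral over `ℤ` and hence
divides a nonzero integer `N` in `S`; then `N M` has entries in `S`, so `N • Γ₁ = B₂ (N M) Sⁿ ⊆ Γ₂`.
As `Γ₁` is finitely generated, `Γ₁ / (Γ₁ ∩ Γ₂)` is a finitely generated torsion group, hence finite.
Exchanging the roles of `Γ₁` and `Γ₂` uses that `M⁻¹` again has entries in `K`.
-/

theorem exists_ne_zero_dvd_algebraMap {A R : Type*} [CommRing A] [Nontrivial A] [CommRing R]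
    [IsDomain R] [Algebra A R] [Algebra.IsIntegral A R] {d : R} (hd : d ≠ 0) :
    ∃ a : A, a ≠ 0 ∧ d ∣ algebraMap A R a := by
  have hne := Ideal.comap_ne_bot_of_integral_mem hd (Ideal.mem_span_singleton_self d)
    (Algebra.IsIntegral.isIntegral (R := A) d)
  obtain ⟨a, ha, ha0⟩ := Submodule.exists_mem_ne_zero_of_ne_bot hne
  exact ⟨a, ha0, Ideal.mem_span_singleton.mp ha⟩

namespace Subring

variable {F : Type*} [Field F] (S : Subring F)

theorem exists_int_eq_mul [Module.Finite ℤ S] {d : F} (hd : d ∈ S) (hd0 : d ≠ 0) :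
    ∃ N : ℤ, N ≠ 0 ∧ ∃ e ∈ S, (N : F) = d * e := by
  obtain ⟨N, hN0, e, hNe⟩ :=
    exists_ne_zero_dvd_algebraMap (A := ℤ) (R := S) (d := ⟨d, hd⟩) (by simpa using hd0)
  exact ⟨N, hN0, e, e.2, by simpa using congrArg Subtype.val hNe⟩

theorem exists_mul_mem_of_forall_eq_div {ι : Type*} (s : Finset ι) (x : ι → F)
    (hx : ∀ i ∈ s, ∃ a b, a ∈ S ∧ b ∈ S ∧ b ≠ 0 ∧ x i = a / b) :
    ∃ d ∈ S, d ≠ 0 ∧ ∀ i ∈ s, d * x i ∈ S := by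
  classical
  induction s using Finset.induction_on with
  | empty => exact ⟨1, S.one_mem, one_ne_zero, by simp⟩
  | insert i s _ ih =>
    obtain ⟨d, hd, hd0, hdx⟩ := ih fun j hj => hx j (Finset.mem_insert_of_mem hj)
    obtain ⟨a, b, ha, hb, hb0, hxi⟩ := hx i (Finset.mem_insert_self i s)
    refine ⟨d * b, S.mul_mem hd hb, mul_ne_zero hd0 hb0, ?_⟩
    rintro j hj
    rcases Finset.mem_insert.mp hj with rfl | hj
    · rw [hxi, mul_assoc, mul_div_cancel₀ _ hb0]
      exact S.mul_mem hd ha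
    · rw [mul_right_comm]
      exact S.mul_mem (hdx j hj) hb

theorem exists_int_mul_mem_of_forall_eq_div [Module.Finite ℤ S] {ι : Type*} [Fintype ι]
    (x : ι → F) (hx : ∀ i, ∃ a b, a ∈ S ∧ b ∈ S ∧ b ≠ 0 ∧ x i = a / b) :
    ∃ N : ℤ, N ≠ 0 ∧ ∀ i, (N : F) * x i ∈ S := by
  obtain ⟨d, hd, hd0, hdx⟩ := S.exists_mul_mem_of_forall_eq_div Finset.univ x fun i _ => hx i
  obtain ⟨N, hN0, e, he, hNe⟩ := S.exists_int_eq_mul hd hd0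
  refine ⟨N, hN0, fun i => ?_⟩
  rw [hNe, mul_right_comm]
  exact S.mul_mem (hdx i (Finset.mem_univ i)) he

end Subring

theorem RingHom.map_nonsing_inv {n K L : Type*} [Fintype n] [DecidableEq n] [Field K] [Field L]
    (f : K →+* L) (A : Matrix n n K) : f.mapMatrix A⁻¹ = (f.mapMatrix A)⁻¹ := by
  rw [Matrix.inv_def, Matrix.inv_def, Ring.inverse_eq_inv', Ring.inverse_eq_inv',
    ← RingHom.map_det, ← RingHom.map_adjugate, ← map_inv₀]
  ext i j
  simp

theorem AddSubgroup.index_addSubgroupOf_ne_zero_of_zsmul_mem {G : Type*} [AddCommGroup G]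
    {H K : AddSubgroup G} [AddGroup.FG H] {N : ℤ} (hN : N ≠ 0) (hNK : ∀ x ∈ H, N • x ∈ K) :
    (K.addSubgroupOf H).index ≠ 0 := by
  have : AddGroup.FG (H ⧸ K.addSubgroupOf H) :=
    AddGroup.fg_of_surjective (QuotientAddGroup.mk'_surjective _)
  have : Module.Finite ℤ (H ⧸ K.addSubgroupOf H) := Module.Finite.iff_addGroup_fg.mpr this
  have : Finite (H ⧸ K.addSubgroupOf H) := by
    refine Module.finite_of_fg_torsion _ fun q => ?_
    induction q using QuotientAddGroup.induction_on with
    | H x =>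
    refine ⟨⟨N, mem_nonZeroDivisors_of_ne_zero hN⟩, ?_⟩
    change N • (x : H ⧸ K.addSubgroupOf H) = 0
    rw [← QuotientAddGroup.mk_zsmul, QuotientAddGroup.eq_zero_iff]
    exact hNK x x.2
  exact AddSubgroup.index_ne_zero_of_finite

theorem Subfield.nonsing_inv_apply_mem {n L : Type*} [Fintype n] [DecidableEq n] [Field L]
    (K : Subfield L) {A : Matrix n n L} (hA : ∀ i j, A i j ∈ K) (i j : n) : A⁻¹ i j ∈ K := by
  let A' : Matrix n n K := Matrix.of fun i j => ⟨A i j, hA i j⟩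
  have hAA' : A = K.subtype.mapMatrix A' := rfl
  rw [hAA', ← RingHom.map_nonsing_inv]
  exact (A'⁻¹ i j).2

namespace IsBasisMatrixOf

variable {n : ℕ} {S : Subring ℝ} {B B₁ B₂ : Matrix (Fin n) (Fin n) ℝ}
  {Γ Γ₁ Γ₂ : AddSubgroup (Fin n → ℝ)}

theorem addGroupFG [Module.Finite ℤ S] (h : IsBasisMatrixOf S B Γ) : AddGroup.FG Γ := by
  let f : (Fin n → S) →+ (Fin n → ℝ) :=
    B.mulVecLin.toAddMonoidHom.comp (AddMonoidHom.compLeft S.subtype.toAddMonoidHom (Fin n))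
  have hf : ∀ c, f c ∈ Γ := fun c => (h.2 _).2 ⟨_, fun i => (c i).2, rfl⟩
  have : AddGroup.FG (Fin n → S) := Module.Finite.iff_addGroup_fg.mp inferInstance
  refine AddGroup.fg_of_surjective (f := f.codRestrict Γ hf) ?_
  rintro ⟨x, hx⟩
  obtain ⟨c, hc, rfl⟩ := (h.2 x).1 hx
  exact ⟨fun i => ⟨c i, hc i⟩, rfl⟩

theorem zsmul_mem (h₁ : IsBasisMatrixOf S B₁ Γ₁) (h₂ : IsBasisMatrixOf S B₂ Γ₂) {N : ℤ}
    (hN : ∀ i j, (N : ℝ) * (B₂⁻¹ * B₁) i j ∈ S) {x : Fin n → ℝ} (hx : x ∈ Γ₁) : N • x ∈ Γ₂ := by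
  obtain ⟨c, hc, rfl⟩ := (h₁.2 x).1 hx
  refine (h₂.2 _).2 ⟨((N : ℝ) • (B₂⁻¹ * B₁)).mulVec c, fun i => ?_, ?_⟩
  · simp only [Matrix.mulVec, dotProduct, Matrix.smul_apply, smul_eq_mul]
    exact S.sum_mem fun j _ => S.mul_mem (hN i j) (hc j)
  · rw [Matrix.mulVec_mulVec, Matrix.mul_smul, ← Matrix.mul_assoc, Matrix.mul_nonsing_inv _ h₂.1,
      Matrix.one_mul, Matrix.smul_mulVec, Int.cast_smul_eq_zsmul]

theorem index_addSubgroupOf_ne_zero [Module.Finite ℤ S] (h₁ : IsBasisMatrixOf S B₁ Γ₁)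
    (h₂ : IsBasisMatrixOf S B₂ Γ₂)
    (h : ∀ i j, ∃ a b, a ∈ S ∧ b ∈ S ∧ b ≠ 0 ∧ (B₂⁻¹ * B₁) i j = a / b) :
    (Γ₂.addSubgroupOf Γ₁).index ≠ 0 := by
  obtain ⟨N, hN0, hN⟩ := S.exists_int_mul_mem_of_forall_eq_div
    (fun p : Fin n × Fin n => (B₂⁻¹ * B₁) p.1 p.2) fun p => h p.1 p.2
  have := h₁.addGroupFG
  exact AddSubgroup.index_addSubgroupOf_ne_zero_of_zsmul_mem hN0
    fun x hx => h₁.zsmul_mem h₂ (fun i j => hN (i, j)) hx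

end IsBasisMatrixOf

theorem stmt10 {n : ℕ} (S : Subring ℝ) (hS : Module.Finite ℤ S)
    (K : Subfield ℝ)
    (hK : ∀ x : ℝ, x ∈ K ↔ ∃ a b : ℝ, a ∈ S ∧ b ∈ S ∧ b ≠ 0 ∧ x = a / b)
    (Γ₁ Γ₂ : AddSubgroup (Fin n → ℝ)) (B₁ B₂ : Matrix (Fin n) (Fin n) ℝ)
    (h₁ : IsBasisMatrixOf S B₁ Γ₁) (h₂ : IsBasisMatrixOf S B₂ Γ₂)
    (h : ∀ i j, (B₂⁻¹ * B₁) i j ∈ K) :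
    Commensurate Γ₁ Γ₂ := by
  have h' : ∀ i j, (B₁⁻¹ * B₂) i j ∈ K := by
    rw [← Matrix.nonsing_inv_nonsing_inv B₂ h₂.1, ← Matrix.mul_inv_rev]
    exact K.nonsing_inv_apply_mem h
  exact ⟨h₁.index_addSubgroupOf_ne_zero h₂ fun i j => (hK _).1 (h i j),
    h₂.index_addSubgroupOf_ne_zero h₁ fun i j => (hK _).1 (h' i j)⟩
end

section
/- Let S ⊂ ℝ be a subring finitely generated as a ℤ-module with field of fractions K, and let Γ ⊂ ℝⁿ be a free S-module of rank n spanning ℝⁿ with basis matrix B_Γ ∈ GL(n,ℝ). Then an isometry f ∈ O(n) is a coincidence isometry of Γ if and only if the matrix of f (with respect to the standard basis) lies in B_Γ · GL(n,K) · B_Γ⁻¹. Consequently OC(Γ) ≅ O(n,ℝ) ∩ (B_Γ GL(n,K) B_Γ⁻¹). -/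
/-! Write `Γ = B·Sⁿ`, so that `QΓ = QB·Sⁿ`. If `QΓ` and `Γ` are commensurate, some multiple
`m·QBeⱼ` lies in `Γ`, so the columns of `B⁻¹QB` lie in `(1/m)·Sⁿ ⊆ Kⁿ`. Conversely, if `M = B⁻¹QB`
has entries in `K`, so does `M⁻¹`; clearing denominators yields nonzero integers `c` with
`c·Γ ⊆ QΓ` and `c·QΓ ⊆ Γ`, because every nonzero `d ∈ S` is integral over `ℤ` and hence divides a
nonzero integer. A subgroup containing `c·Λ` has finite index in a finitely generated abelian
group `Λ`, the quotient being finitely generated and torsion. -/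

open Matrix

section ColumnSpan

variable {ι R : Type*} [Fintype ι] [CommRing R] (S : Subring R)

def columnSpan (A : Matrix ι ι R) : AddSubgroup (ι → R) :=
  (A.mulVecLin.toAddMonoidHom.comp (AddMonoidHom.compLeft S.subtype.toAddMonoidHom ι)).range

variable {S}

theorem mem_columnSpan {A : Matrix ι ι R} {x : ι → R} :
    x ∈ columnSpan S A ↔ ∃ c : ι → R, (∀ i, c i ∈ S) ∧ x = A *ᵥ c := by
  refine ⟨?_, fun ⟨c, hc, hx⟩ => ⟨fun i => ⟨c i, hc i⟩, hx.symm⟩⟩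
  rintro ⟨c, rfl⟩
  exact ⟨fun i => c i, fun i => (c i).2, rfl⟩

theorem columnSpan_mul_le {A P : Matrix ι ι R} (hP : ∀ i j, P i j ∈ S) :
    columnSpan S (A * P) ≤ columnSpan S A := by
  intro x hx
  obtain ⟨c, hc, rfl⟩ := mem_columnSpan.1 hx
  refine mem_columnSpan.2 ⟨P *ᵥ c, fun i => ?_, (mulVec_mulVec c A P).symm⟩
  exact S.sum_mem fun j _ => S.mul_mem (hP i j) (hc j)

theorem map_mulVecLin_columnSpan (Q A : Matrix ι ι R) :
    (columnSpan S A).map Q.mulVecLin.toAddMonoidHom = columnSpan S (Q * A) := by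
  rw [columnSpan, columnSpan, AddMonoidHom.map_range, mulVecLin_mul]
  rfl

theorem fg_columnSpan (hS : Module.Finite ℤ S) (A : Matrix ι ι R) :
    AddGroup.FG (columnSpan S A) :=
  have : AddGroup.FG (ι → S) := Module.Finite.iff_addGroup_fg.1 inferInstance
  AddGroup.fg_range _

end ColumnSpan

theorem IsBasisMatrixOf.eq_columnSpan {n : ℕ} {S : Subring ℝ} {B : Matrix (Fin n) (Fin n) ℝ}
    {Γ : AddSubgroup (Fin n → ℝ)} (hB : IsBasisMatrixOf S B Γ) : Γ = columnSpan S B :=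
  AddSubgroup.ext fun x => (hB.2 x).trans mem_columnSpan.symm

theorem AddSubgroup.index_addSubgroupOf_ne_zero_of_zsmul_mem_s11 {G : Type*} [AddCommGroup G]
    {H Λ : AddSubgroup G} (hΛ : AddGroup.FG Λ) {c : ℤ} (hc : c ≠ 0)
    (h : ∀ x ∈ Λ, c • x ∈ H) : (H.addSubgroupOf Λ).index ≠ 0 := by
  have htorsion : IsAddTorsion (Λ ⧸ H.addSubgroupOf Λ) := by
    intro y
    obtain ⟨x, rfl⟩ := QuotientAddGroup.mk_surjective y
    refine isOfFinAddOrder_iff_zsmul_eq_zero.2 ⟨c, hc, ?_⟩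
    rw [← QuotientAddGroup.mk_zsmul, QuotientAddGroup.eq_zero_iff]
    exact h x x.2
  have := AddCommGroup.finite_of_fg_isAddTorsion _ htorsion
  exact AddSubgroup.index_ne_zero_of_finite

theorem exists_int_mul_div_mem {F : Type*} [Field F] {S : Subring F} (hS : Module.Finite ℤ S)
    {a b : F} (ha : a ∈ S) (hb : b ∈ S) (hb0 : b ≠ 0) :
    ∃ c : ℤ, c ≠ 0 ∧ (c : F) * (a / b) ∈ S := by
  have hb0' : (⟨b, hb⟩ : S) ≠ 0 := Subtype.coe_ne_coe.1 hb0
  obtain ⟨c, hcb, hc⟩ := Submodule.exists_mem_ne_zero_of_ne_bot <|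
    Ideal.comap_ne_bot_of_integral_mem hb0' (Ideal.mem_span_singleton_self _)
      (Algebra.IsIntegral.isIntegral (R := ℤ) _)
  obtain ⟨s, hs⟩ := Ideal.mem_span_singleton'.1 hcb
  refine ⟨c, hc, ?_⟩
  have hcs : (c : F) = s * b := by simpa using congrArg Subtype.val hs.symm
  have hca : (c : F) * (a / b) = s * a := by rw [hcs]; field_simp
  exact hca ▸ S.mul_mem s.2 ha

theorem exists_int_mul_forall_mem {ι R : Type*} [Fintype ι] [CommRing R] {S : Subring R}
    {x : ι → R} (h : ∀ i, ∃ c : ℤ, c ≠ 0 ∧ (c : R) * x i ∈ S) :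
    ∃ c : ℤ, c ≠ 0 ∧ ∀ i, (c : R) * x i ∈ S := by
  classical
  choose c hc0 hc using h
  refine ⟨∏ i, c i, Finset.prod_ne_zero_iff.2 fun i _ => hc0 i, fun i => ?_⟩
  rw [← Finset.mul_prod_erase _ _ (Finset.mem_univ i), Int.cast_mul, mul_comm (c i : R),
    mul_assoc]
  exact S.mul_mem (intCast_mem S _) (hc i)

theorem Matrix.inv_apply_mem_of_forall_mem {ι F : Type*} [Fintype ι] [DecidableEq ι] [Field F]
    {K : Subfield F} {M : Matrix ι ι F} (hM : ∀ i j, M i j ∈ K) (i j : ι) : M⁻¹ i j ∈ K := by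
  set M' : Matrix ι ι K := fun i j => ⟨M i j, hM i j⟩
  have hM' : M = K.subtype.mapMatrix M' := rfl
  rw [hM', inv_def, ← RingHom.map_det, ← RingHom.map_adjugate, Ring.inverse_eq_inv', ← map_inv₀]
  exact K.mul_mem (M'.det⁻¹).2 (M'.adjugate i j).2

theorem index_addSubgroupOf_columnSpan_ne_zero {ι F : Type*} [Fintype ι] [Field F]
    {S : Subring F} {K : Subfield F} (hS : Module.Finite ℤ S)
    (hKS : ∀ x ∈ K, ∃ a b : F, a ∈ S ∧ b ∈ S ∧ b ≠ 0 ∧ x = a / b)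
    {A A' P : Matrix ι ι F} (hP : ∀ i j, P i j ∈ K) (hA : A = A' * P) :
    ((columnSpan S A').addSubgroupOf (columnSpan S A)).index ≠ 0 := by
  obtain ⟨c, hc0, hc⟩ : ∃ c : ℤ, c ≠ 0 ∧ ∀ p : ι × ι, (c : F) * P p.1 p.2 ∈ S :=
    exists_int_mul_forall_mem fun p => by
      obtain ⟨a, b, ha, hb, hb0, hab⟩ := hKS _ (hP p.1 p.2)
      exact hab ▸ exists_int_mul_div_mem hS ha hb hb0
  refine AddSubgroup.index_addSubgroupOf_ne_zero_of_zsmul_mem_s11 (fg_columnSpan hS A) hc0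
    fun x hx => columnSpan_mul_le (P := (c : F) • P) (fun i j => hc (i, j)) ?_
  obtain ⟨v, hv, rfl⟩ := mem_columnSpan.1 hx
  refine mem_columnSpan.2 ⟨v, hv, ?_⟩
  rw [hA, ← Int.cast_smul_eq_zsmul F, Matrix.mul_smul, smul_mulVec]

theorem mem_of_index_addSubgroupOf_columnSpan_ne_zero {ι F : Type*} [Fintype ι] [DecidableEq ι]
    [Field F] [CharZero F] {S : Subring F} {K : Subfield F} (hSK : ∀ x ∈ S, x ∈ K)
    {A A' : Matrix ι ι F} (hA : IsUnit A.det)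
    (h : ((columnSpan S A).addSubgroupOf (columnSpan S A')).index ≠ 0) (i j : ι) :
    (A⁻¹ * A') i j ∈ K := by
  have hcol : A' *ᵥ Pi.single j 1 ∈ columnSpan S A' := by
    refine mem_columnSpan.2 ⟨Pi.single j 1, fun k => ?_, rfl⟩
    rcases eq_or_ne k j with rfl | hk
    · simp [S.one_mem]
    · simp [hk, S.zero_mem]
  obtain ⟨m, hm, -, hmem⟩ := AddSubgroup.exists_nsmul_mem_of_index_ne_zero h ⟨_, hcol⟩
  obtain ⟨c, hc, hmc⟩ := mem_columnSpan.1 (AddSubgroup.mem_addSubgroupOf.1 hmem)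
  have hmij : (m : F) * (A⁻¹ * A') i j = c i := by
    have := congrArg (A⁻¹ *ᵥ ·) hmc
    simp only [AddSubgroup.coe_nsmul, ← Nat.cast_smul_eq_nsmul F, mulVec_smul, mulVec_mulVec,
      nonsing_inv_mul _ hA, one_mulVec] at this
    simpa [mulVec_single] using congrFun this i
  rw [eq_div_of_mul_eq (Nat.cast_ne_zero.2 hm.ne') ((mul_comm _ _).trans hmij)]
  exact K.div_mem (hSK _ (hc i)) (natCast_mem K m)

theorem commensurate_columnSpan_iff {n : ℕ} {S : Subring ℝ} {K : Subfield ℝ}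
    (hS : Module.Finite ℤ S) (hSK : ∀ x ∈ S, x ∈ K)
    (hKS : ∀ x ∈ K, ∃ a b : ℝ, a ∈ S ∧ b ∈ S ∧ b ≠ 0 ∧ x = a / b)
    {A A' : Matrix (Fin n) (Fin n) ℝ} (hA : IsUnit A.det) (hA' : IsUnit A'.det) :
    Commensurate (columnSpan S A) (columnSpan S A') ↔ ∀ i j, (A⁻¹ * A') i j ∈ K := by
  refine ⟨fun h => mem_of_index_addSubgroupOf_columnSpan_ne_zero hSK hA h.2, fun hM => ⟨?_, ?_⟩⟩
  · refine index_addSubgroupOf_columnSpan_ne_zero hS hKS (inv_apply_mem_of_forall_mem hM) ?_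
    rw [Matrix.mul_inv_rev, nonsing_inv_nonsing_inv _ hA, mul_nonsing_inv_cancel_left _ _ hA']
  · exact index_addSubgroupOf_columnSpan_ne_zero hS hKS hM (mul_nonsing_inv_cancel_left _ _ hA).symm

theorem stmt11 {n : ℕ} (S : Subring ℝ) (hS : Module.Finite ℤ S)
    (K : Subfield ℝ)
    (hK : ∀ x : ℝ, x ∈ K ↔ ∃ a b : ℝ, a ∈ S ∧ b ∈ S ∧ b ≠ 0 ∧ x = a / b)
    (Γ : AddSubgroup (Fin n → ℝ)) (B : Matrix (Fin n) (Fin n) ℝ)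
    (hB : IsBasisMatrixOf S B Γ) :
    ∀ Q ∈ Matrix.orthogonalGroup (Fin n) ℝ,
      (Commensurate Γ (Γ.map Q.mulVecLin.toAddMonoidHom) ↔
        ∃ M : Matrix (Fin n) (Fin n) ℝ,
          (∀ i j, M i j ∈ K) ∧ IsUnit M.det ∧ Q = B * M * B⁻¹) := by
  intro Q hQ
  have hSK : ∀ x ∈ S, x ∈ K := fun x hx =>
    (hK x).2 ⟨x, 1, hx, S.one_mem, one_ne_zero, (div_one x).symm⟩
  have hQB : IsUnit (Q * B).det := by
    rw [det_mul]
    exact (UnitaryGroup.det_isUnit ⟨Q, hQ⟩).mul hB.1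
  rw [hB.eq_columnSpan, map_mulVecLin_columnSpan,
    commensurate_columnSpan_iff hS hSK (fun x => (hK x).1) hB.1 hQB]
  constructor
  · refine fun hM => ⟨B⁻¹ * (Q * B), hM, ?_, ?_⟩
    · rw [det_mul]
      exact (isUnit_nonsing_inv_det _ hB.1).mul hQB
    · rw [mul_nonsing_inv_cancel_left _ _ hB.1, mul_nonsing_inv_cancel_right _ _ hB.1]
  · rintro ⟨M, hM, -, rfl⟩
    rwa [Matrix.mul_assoc _ B⁻¹, nonsing_inv_mul _ hB.1, Matrix.mul_one,
      nonsing_inv_mul_cancel_left _ _ hB.1]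
end

section
/- Let S ⊂ ℝ be a subring finitely generated as a ℤ-module with field of fractions K, and let Γ ⊂ ℝⁿ be a free S-module of rank n spanning ℝⁿ that is contained in Kⁿ. Then OC(Γ) is isomorphic to O(n,K) := O(n,ℝ) ∩ GL(n,K). In particular, OC(Sⁿ) ≅ O(n,K). -/
/-!
If `QΓ` is commensurate with `Γ`, then `N • QΓ ⊆ Γ ⊆ Kⁿ` for `N` the index, so the columns of
`QB` lie in `Kⁿ` and `Q = (QB)B⁻¹` has entries in `K`.

Conversely, if `Q` has entries in `K`, so do the change-of-basis matrices `(QB)⁻¹B` and `B⁻¹QB`.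
Since `S` is integral over `ℤ`, every nonzero `b ∈ S` divides a positive integer in `S`
(the ideal `bS` meets `ℤ` nontrivially), so one positive integer `N` clears all their
denominators; then `N • Γ ⊆ QΓ` and `N • QΓ ⊆ Γ`. As both lattices are finitely generated,
the quotients `Γ / (Γ ∩ QΓ)` and `QΓ / (Γ ∩ QΓ)` are finitely generated torsion groups,
hence finite.
-/

open Matrix

theorem exists_mul_eq_natCast_of_ne_zero {R : Type*} [CommRing R] [IsDomain R]
    [Algebra.IsIntegral ℤ R] {s : R} (hs : s ≠ 0) :
    ∃ t : R, ∃ N : ℕ, 0 < N ∧ s * t = N := by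
  have hI : (Ideal.span {s}).comap (algebraMap ℤ R) ≠ ⊥ :=
    Ideal.comap_ne_bot_of_integral_mem hs (Ideal.mem_span_singleton_self s)
      (Algebra.IsIntegral.isIntegral s)
  obtain ⟨m, hm, hm0⟩ := (Submodule.ne_bot_iff _).mp hI
  obtain ⟨t, ht⟩ := Ideal.mem_span_singleton'.mp (Ideal.mem_comap.mp hm)
  refine ⟨m.sign * t, m.natAbs, Int.natAbs_pos.mpr hm0, ?_⟩
  rw [mul_left_comm, mul_comm s, ht, eq_intCast, ← Int.cast_mul, ← Int.cast_natCast,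
    Int.sign_mul_self_eq_natAbs]

theorem exists_natCast_mul_div_mem {F : Type*} [Field F] (S : Subring F) [Algebra.IsIntegral ℤ S]
    {a b : F} (ha : a ∈ S) (hb : b ∈ S) (hb0 : b ≠ 0) :
    ∃ N : ℕ, 0 < N ∧ (N : F) * (a / b) ∈ S := by
  obtain ⟨t, N, hN, hbt⟩ :=
    exists_mul_eq_natCast_of_ne_zero (s := (⟨b, hb⟩ : S)) (by simpa using hb0)
  refine ⟨N, hN, ?_⟩
  have hbt : b * t = N := by simpa using congrArg Subtype.val hbt
  rw [← hbt, mul_comm b, mul_assoc, mul_div_cancel₀ _ hb0]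
  exact S.mul_mem t.2 ha

theorem exists_natCast_mul_mem_of_forall_eq_div {F : Type*} [Field F] (S : Subring F)
    [Algebra.IsIntegral ℤ S] {ι : Type*} [Finite ι] (v : ι → F)
    (hv : ∀ i, ∃ a b, a ∈ S ∧ b ∈ S ∧ b ≠ 0 ∧ v i = a / b) :
    ∃ N : ℕ, 0 < N ∧ ∀ i, (N : F) * v i ∈ S := by
  classical
  have := Fintype.ofFinite ι
  choose a b ha hb hb0 hv using hv
  choose N hN hNv using fun i => exists_natCast_mul_div_mem S (ha i) (hb i) (hb0 i)
  refine ⟨∏ i, N i, Finset.prod_pos fun i _ => hN i, fun i => ?_⟩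
  rw [← Finset.prod_erase_mul _ _ (Finset.mem_univ i), Nat.cast_mul, mul_assoc, hv]
  exact S.mul_mem (natCast_mem S _) (hNv i)

theorem AddSubgroup.index_addSubgroupOf_ne_zero_iff {A : Type*} [AddCommGroup A]
    (H G : AddSubgroup A) [AddGroup.FG G] :
    (H.addSubgroupOf G).index ≠ 0 ↔ ∃ N : ℕ, 0 < N ∧ ∀ x ∈ G, N • x ∈ H := by
  constructor
  · intro h
    exact ⟨_, Nat.pos_of_ne_zero h, fun x hx => (H.addSubgroupOf G).nsmul_index_mem ⟨x, hx⟩⟩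
  · rintro ⟨N, hN, hNG⟩
    have : Finite (G ⧸ H.addSubgroupOf G) := by
      refine AddCommGroup.finite_of_fg_isAddTorsion _ fun q => ?_
      induction q using QuotientAddGroup.induction_on with
      | H x =>
        refine isOfFinAddOrder_iff_nsmul_eq_zero.mpr ⟨N, hN, ?_⟩
        rw [← QuotientAddGroup.mk_nsmul, QuotientAddGroup.eq_zero_iff]
        exact hNG x x.2
    exact AddSubgroup.index_ne_zero_of_finite

theorem Subring.exists_map_subtype_eq_of_mem_matrix {R n : Type*} [Ring R] [Fintype n]
    [DecidableEq n] (T : Subring R) {M : Matrix n n R} (hM : M ∈ T.matrix) :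
    ∃ Mt : Matrix n n T, Mt.map T.subtype = M :=
  ⟨of fun i j => ⟨M i j, hM i j⟩, rfl⟩

theorem Subring.adjugate_mem_matrix {R n : Type*} [CommRing R] [Fintype n] [DecidableEq n]
    (T : Subring R) {M : Matrix n n R} (hM : M ∈ T.matrix) : M.adjugate ∈ T.matrix := by
  obtain ⟨Mt, rfl⟩ := T.exists_map_subtype_eq_of_mem_matrix hM
  rw [← RingHom.mapMatrix_apply, ← RingHom.map_adjugate]
  exact fun i j => (Mt.adjugate i j).2

theorem Subring.det_mem_of_mem_matrix {R n : Type*} [CommRing R] [Fintype n] [DecidableEq n]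
    (T : Subring R) {M : Matrix n n R} (hM : M ∈ T.matrix) : M.det ∈ T := by
  obtain ⟨Mt, rfl⟩ := T.exists_map_subtype_eq_of_mem_matrix hM
  rw [← RingHom.mapMatrix_apply, ← RingHom.map_det]
  exact Mt.det.2

theorem Subfield.inv_mem_matrix {F n : Type*} [Field F] [Fintype n] [DecidableEq n]
    (K : Subfield F) {M : Matrix n n F} (hM : M ∈ K.toSubring.matrix) :
    M⁻¹ ∈ K.toSubring.matrix := by
  intro i j
  rw [M.inv_def, Ring.inverse_eq_inv, Matrix.smul_apply, smul_eq_mul]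
  exact K.mul_mem (K.inv_mem (K.toSubring.det_mem_of_mem_matrix hM))
    (K.toSubring.adjugate_mem_matrix hM i j)

theorem Subring.mulVec_mem {R n : Type*} [CommRing R] [Fintype n] [DecidableEq n]
    (T : Subring R) {M : Matrix n n R} (hM : M ∈ T.matrix) {c : n → R} (hc : ∀ i, c i ∈ T)
    (i : n) : (M *ᵥ c) i ∈ T :=
  sum_mem fun j _ => T.mul_mem (hM i j) (hc j)

namespace IsBasisMatrixOf

variable {n : ℕ} {S : Subring ℝ} {B : Matrix (Fin n) (Fin n) ℝ} {Γ : AddSubgroup (Fin n → ℝ)}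

theorem col_mem (hB : IsBasisMatrixOf S B Γ) (j : Fin n) : B.col j ∈ Γ := by
  refine (hB.2 _).2 ⟨Pi.single j 1, fun i => ?_, (B.mulVec_single_one j).symm⟩
  rw [Pi.single_apply]
  split_ifs
  exacts [S.one_mem, S.zero_mem]

theorem mem_matrix_of_forall_mem (hB : IsBasisMatrixOf S B Γ) {T : Subring ℝ}
    (hΓ : ∀ x ∈ Γ, ∀ i, x i ∈ T) : B ∈ T.matrix :=
  fun i j => hΓ _ (hB.col_mem j) i

theorem fg [Module.Finite ℤ S] (hB : IsBasisMatrixOf S B Γ) : AddGroup.FG Γ := by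
  let f : (Fin n → S) →+ (Fin n → ℝ) :=
    B.mulVecLin.toAddMonoidHom.comp (S.subtype.toAddMonoidHom.compLeft (Fin n))
  have hΓ : Γ = f.range := by
    ext x
    rw [hB.2, AddMonoidHom.mem_range]
    constructor
    · rintro ⟨c, hc, rfl⟩
      exact ⟨fun i => ⟨c i, hc i⟩, rfl⟩
    · rintro ⟨c, rfl⟩
      exact ⟨fun i => c i, fun i => (c i).2, rfl⟩
  have : AddGroup.FG (Fin n → S) := Module.Finite.iff_addGroup_fg.mp inferInstance
  rw [hΓ]
  infer_instance

theorem map (hB : IsBasisMatrixOf S B Γ) {Q : Matrix (Fin n) (Fin n) ℝ} (hQ : IsUnit Q.det) :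
    IsBasisMatrixOf S (Q * B) (Γ.map Q.mulVecLin.toAddMonoidHom) := by
  refine ⟨by rw [det_mul]; exact hQ.mul hB.1, fun x => ?_⟩
  simp only [AddSubgroup.mem_map, hB.2]
  constructor
  · rintro ⟨_, ⟨c, hc, rfl⟩, rfl⟩
    exact ⟨c, hc, by simp [mulVec_mulVec]⟩
  · rintro ⟨c, hc, rfl⟩
    exact ⟨_, ⟨c, hc, rfl⟩, by simp [mulVec_mulVec]⟩

theorem nsmul_mem_of_mul_eq {A A' R : Matrix (Fin n) (Fin n) ℝ} {Λ Λ' : AddSubgroup (Fin n → ℝ)}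
    (hA : IsBasisMatrixOf S A Λ) (hA' : IsBasisMatrixOf S A' Λ') (hR : A' * R = A) {N : ℕ}
    (hNR : (N : ℝ) • R ∈ S.matrix) {x : Fin n → ℝ} (hx : x ∈ Λ) : N • x ∈ Λ' := by
  obtain ⟨c, hc, rfl⟩ := (hA.2 x).1 hx
  refine (hA'.2 _).2 ⟨((N : ℝ) • R) *ᵥ c, S.mulVec_mem hNR hc, ?_⟩
  rw [mulVec_mulVec, Matrix.mul_smul, hR, ← Nat.cast_smul_eq_nsmul ℝ, smul_mulVec]

theorem index_addSubgroupOf_ne_zero_s12 [Module.Finite ℤ S] {K : Subfield ℝ}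
    (hK : ∀ x ∈ K, ∃ a b, a ∈ S ∧ b ∈ S ∧ b ≠ 0 ∧ x = a / b)
    {A A' : Matrix (Fin n) (Fin n) ℝ} {Λ Λ' : AddSubgroup (Fin n → ℝ)}
    (hA : IsBasisMatrixOf S A Λ) (hA' : IsBasisMatrixOf S A' Λ')
    (hAK : A ∈ K.toSubring.matrix) (hA'K : A' ∈ K.toSubring.matrix) :
    (Λ'.addSubgroupOf Λ).index ≠ 0 := by
  have := hA.fg
  have hRK : A'⁻¹ * A ∈ K.toSubring.matrix := mul_mem (K.inv_mem_matrix hA'K) hAK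
  obtain ⟨N, hN, hNR⟩ := exists_natCast_mul_mem_of_forall_eq_div S
    (fun p : Fin n × Fin n => (A'⁻¹ * A) p.1 p.2) fun p => hK _ (hRK p.1 p.2)
  refine (AddSubgroup.index_addSubgroupOf_ne_zero_iff _ _).2 ⟨N, hN, fun x hx => ?_⟩
  exact hA.nsmul_mem_of_mul_eq hA' (mul_nonsing_inv_cancel_left _ _ hA'.1)
    (fun i j => hNR (i, j)) hx

end IsBasisMatrixOf

theorem stmt12 {n : ℕ} (S : Subring ℝ) (hS : Module.Finite ℤ S)
    (K : Subfield ℝ)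
    (hK : ∀ x : ℝ, x ∈ K ↔ ∃ a b : ℝ, a ∈ S ∧ b ∈ S ∧ b ≠ 0 ∧ x = a / b)
    (Γ : AddSubgroup (Fin n → ℝ)) (B : Matrix (Fin n) (Fin n) ℝ)
    (hB : IsBasisMatrixOf S B Γ)
    (hΓK : ∀ x ∈ Γ, ∀ i, x i ∈ K) :
    ∀ Q ∈ Matrix.orthogonalGroup (Fin n) ℝ,
      (Commensurate Γ (Γ.map Q.mulVecLin.toAddMonoidHom) ↔ ∀ i j, Q i j ∈ K) := by
  intro Q hQ
  have hQB := hB.map <|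
    isUnit_det_of_right_inverse ((mem_orthogonalGroup_iff (Fin n) ℝ).mp hQ)
  have hBK : B ∈ K.toSubring.matrix := hB.mem_matrix_of_forall_mem hΓK
  have hKS : ∀ x ∈ K, ∃ a b, a ∈ S ∧ b ∈ S ∧ b ≠ 0 ∧ x = a / b := fun x => (hK x).1
  constructor
  · rintro ⟨-, hidx⟩
    have := hQB.fg
    obtain ⟨N, hN, hNΓ⟩ := (AddSubgroup.index_addSubgroupOf_ne_zero_iff _ _).1 hidx
    have hQBK : Q * B ∈ K.toSubring.matrix := hQB.mem_matrix_of_forall_mem fun x hx i => by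
      have h := K.div_mem (hΓK _ (hNΓ x hx) i) (natCast_mem K N)
      rwa [Pi.smul_apply, nsmul_eq_mul, mul_div_cancel_left₀ _ (Nat.cast_ne_zero.mpr hN.ne')] at h
    rw [← mul_nonsing_inv_cancel_right B Q hB.1]
    exact mul_mem hQBK (K.inv_mem_matrix hBK)
  · intro hQK
    have hQBK : Q * B ∈ K.toSubring.matrix := mul_mem hQK hBK
    exact ⟨hB.index_addSubgroupOf_ne_zero_s12 hKS hQB hBK hQBK,
      hQB.index_addSubgroupOf_ne_zero_s12 hKS hB hQBK hBK⟩
end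

section
/- Let S ⊂ ℝ be a subring finitely generated as a ℤ-module and let Γ ⊂ ℝⁿ be a free S-module of rank n spanning ℝⁿ. Suppose that for every non-zero γ ∈ Γ, the reflection ρ_γ along γ is a coincidence isometry of Γ. Then every coincidence isometry of Γ is a product of at most n reflections ρ_γ with γ ∈ Γ \ {0}. -/
open Matrix

/-- The matrix of the reflection `ρ_γ : x ↦ x - 2(⟨x,γ⟩/⟨γ,γ⟩)γ` along `γ`. -/
noncomputable def reflMatrix {n : ℕ} (γ : Fin n → ℝ) : Matrix (Fin n) (Fin n) ℝ :=
  1 - (2 / dotProduct γ γ) • Matrix.vecMulVec γ γ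

/-- `Q` (acting on `ℝⁿ` by `x ↦ Q.mulVec x`) is a coincidence isometry of `Γ`:
it is orthogonal and `Γ` is commensurate with its image `Q(Γ)`. -/
def IsCoincidenceIsometry {n : ℕ} (Γ : AddSubgroup (Fin n → ℝ))
    (Q : Matrix (Fin n) (Fin n) ℝ) : Prop :=
  Q ∈ Matrix.orthogonalGroup (Fin n) ℝ ∧
    Commensurate Γ (Γ.map Q.mulVecLin.toAddMonoidHom)

/-- `Q` is a product of at most `n` reflections along non-zero elements of `Γ`. -/
def IsProdOfAtMostNCoincReflections {n : ℕ} (Γ : AddSubgroup (Fin n → ℝ))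
    (Q : Matrix (Fin n) (Fin n) ℝ) : Prop :=
  ∃ k : ℕ, k ≤ n ∧ ∃ g : Fin k → (Fin n → ℝ), (∀ i, g i ∈ Γ ∧ g i ≠ 0) ∧
    Q = (List.ofFn fun i => reflMatrix (g i)).prod

/-- `b` is an `S`-basis of `Γ` which is also an `ℝ`-basis of `ℝⁿ`; i.e. `Γ` is
a free `S`-module of rank `n` spanning `ℝⁿ` with basis `b`. -/
def IsSBasisOf {n : ℕ} (S : Subring ℝ) (b : Fin n → (Fin n → ℝ))
    (Γ : AddSubgroup (Fin n → ℝ)) : Prop :=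
  LinearIndependent ℝ b ∧ Submodule.span ℝ (Set.range b) = ⊤ ∧
    ∀ x, x ∈ Γ ↔ ∃ c : Fin n → ℝ, (∀ i, c i ∈ S) ∧ x = ∑ i, c i • b i

/-!
Cartan–Dieudonné, run along the basis `b`. If the coincidence isometry `Q` fixes
`b₀, …, bᵢ₋₁` but moves `v = bᵢ`, then `γ = k • (Q v - v)` lies in `Γ` for some `k ≠ 0`,
because `Q(Γ)` and `Γ` are commensurate. The reflection `ρ_γ` swaps `Q v` and `v` and fixes
every vector orthogonal to `Q v - v`, among them everything `Q` fixes, so `ρ_γ Q` is a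
coincidence isometry fixing `b₀, …, bᵢ`. After at most `n` steps a basis is fixed, and the
isometry is the identity.
-/

variable {n : ℕ}

namespace Commensurate

variable {A B C : AddSubgroup (Fin n → ℝ)}

lemma trans (hAB : Commensurate A B) (hBC : Commensurate B C) : Commensurate A C :=
  ⟨AddSubgroup.relIndex_ne_zero_trans hBC.1 hAB.1,
    AddSubgroup.relIndex_ne_zero_trans hAB.2 hBC.2⟩

lemma map_of_injective {f : (Fin n → ℝ) →+ (Fin n → ℝ)} (hf : Function.Injective f)
    (h : Commensurate A B) : Commensurate (A.map f) (B.map f) := by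
  constructor
  · change (B.map f).relIndex (A.map f) ≠ 0
    rw [AddSubgroup.relIndex_map_map_of_injective _ _ hf]
    exact h.1
  · change (A.map f).relIndex (B.map f) ≠ 0
    rw [AddSubgroup.relIndex_map_map_of_injective _ _ hf]
    exact h.2

lemma exists_nsmul_mem (h : Commensurate A B) : ∃ k : ℕ, k ≠ 0 ∧ ∀ x ∈ B, k • x ∈ A := by
  refine ⟨(A.addSubgroupOf B).index, h.2, fun x hx => ?_⟩
  simpa only [AddSubgroup.mem_addSubgroupOf, AddSubgroup.coe_nsmul] using
    AddSubgroup.nsmul_index_mem (A.addSubgroupOf B) ⟨x, hx⟩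

end Commensurate

section Orthogonal

variable {Q : Matrix (Fin n) (Fin n) ℝ} (hQ : Q ∈ orthogonalGroup (Fin n) ℝ)
include hQ

lemma mulVec_injective_of_mem_orthogonalGroup : Function.Injective Q.mulVec := by
  intro x y hxy
  have hQ' : Qᵀ * Q = 1 := (mem_orthogonalGroup_iff' _ _).1 hQ
  simpa only [mulVec_mulVec, hQ', one_mulVec] using congrArg (Qᵀ *ᵥ ·) hxy

lemma dotProduct_mulVec_mulVec_of_mem_orthogonalGroup (u v : Fin n → ℝ) :
    (Q *ᵥ u) ⬝ᵥ (Q *ᵥ v) = u ⬝ᵥ v := by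
  rw [dotProduct_mulVec, ← vecMul_transpose, vecMul_vecMul,
    (mem_orthogonalGroup_iff' _ _).1 hQ, vecMul_one]

end Orthogonal

lemma IsCoincidenceIsometry.mul {Γ : AddSubgroup (Fin n → ℝ)} {A B : Matrix (Fin n) (Fin n) ℝ}
    (hA : IsCoincidenceIsometry Γ A) (hB : IsCoincidenceIsometry Γ B) :
    IsCoincidenceIsometry Γ (A * B) := by
  refine ⟨mul_mem hA.1 hB.1, hA.2.trans ?_⟩
  have hmap : Γ.map (A * B).mulVecLin.toAddMonoidHom =
      (Γ.map B.mulVecLin.toAddMonoidHom).map A.mulVecLin.toAddMonoidHom := by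
    rw [AddSubgroup.map_map, mulVecLin_mul]
    rfl
  rw [hmap]
  exact hB.2.map_of_injective (mulVec_injective_of_mem_orthogonalGroup hA.1)

lemma eq_one_of_mulVec_eq_self {Q : Matrix (Fin n) (Fin n) ℝ} {F : Set (Fin n → ℝ)}
    (hF : Submodule.span ℝ F = ⊤) (hfix : ∀ x ∈ F, Q *ᵥ x = x) : Q = 1 := by
  apply Matrix.toLin'.injective
  rw [Matrix.toLin'_one]
  exact LinearMap.ext_on hF hfix

lemma reflMatrix_mulVec (γ x : Fin n → ℝ) :
    reflMatrix γ *ᵥ x = x - (2 / (γ ⬝ᵥ γ) * (γ ⬝ᵥ x)) • γ := by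
  simp [reflMatrix, sub_mulVec, smul_mulVec, vecMulVec_mulVec, smul_smul, mul_comm]

lemma reflMatrix_mulVec_of_dotProduct_eq_zero {γ x : Fin n → ℝ} (h : γ ⬝ᵥ x = 0) :
    reflMatrix γ *ᵥ x = x := by
  simp [reflMatrix_mulVec, h]

lemma reflMatrix_sub_mulVec_self {u v : Fin n → ℝ} (hnorm : u ⬝ᵥ u = v ⬝ᵥ v) (hne : u ≠ v) :
    reflMatrix (u - v) *ᵥ u = v := by
  have hd : (u - v) ⬝ᵥ (u - v) = 2 * ((u - v) ⬝ᵥ u) := by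
    simp only [sub_dotProduct, dotProduct_sub, dotProduct_comm v u] at *
    linarith
  have hd0 : (u - v) ⬝ᵥ u ≠ 0 := by
    intro h0
    rw [h0, mul_zero, dotProduct_self_eq_zero] at hd
    exact hne (sub_eq_zero.1 hd)
  rw [reflMatrix_mulVec, hd, div_mul_eq_mul_div, div_self (mul_ne_zero two_ne_zero hd0),
    one_smul, sub_sub_cancel]

lemma reflMatrix_smul {c : ℝ} (hc : c ≠ 0) (γ : Fin n → ℝ) :
    reflMatrix (c • γ) = reflMatrix γ := by
  apply mulVec_injective
  funext x
  rcases eq_or_ne γ 0 with rfl | hγ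
  · simp
  have hγγ : γ ⬝ᵥ γ ≠ 0 := mt dotProduct_self_eq_zero.1 hγ
  simp only [reflMatrix_mulVec, smul_dotProduct, dotProduct_smul, smul_smul, smul_eq_mul]
  congr 2
  field_simp

lemma reflMatrix_mul_self {γ : Fin n → ℝ} (hγ : γ ≠ 0) : reflMatrix γ * reflMatrix γ = 1 := by
  apply mulVec_injective
  funext x
  have hγγ : γ ⬝ᵥ γ ≠ 0 := mt dotProduct_self_eq_zero.1 hγ
  have hγρx : γ ⬝ᵥ (reflMatrix γ *ᵥ x) = -(γ ⬝ᵥ x) := by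
    rw [reflMatrix_mulVec, dotProduct_sub, dotProduct_smul, smul_eq_mul]
    field_simp
    ring
  rw [← mulVec_mulVec, reflMatrix_mulVec _ (reflMatrix γ *ᵥ x), hγρx, reflMatrix_mulVec, one_mulVec]
  module

def IsProdOfReflections (Γ : AddSubgroup (Fin n → ℝ)) (m : ℕ) (Q : Matrix (Fin n) (Fin n) ℝ) :
    Prop :=
  ∃ k ≤ m, ∃ g : Fin k → (Fin n → ℝ), (∀ i, g i ∈ Γ ∧ g i ≠ 0) ∧
    Q = (List.ofFn fun i => reflMatrix (g i)).prod

namespace IsProdOfReflections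

variable {Γ : AddSubgroup (Fin n → ℝ)} {m : ℕ} {Q : Matrix (Fin n) (Fin n) ℝ}

lemma one (m : ℕ) : IsProdOfReflections Γ m 1 :=
  ⟨0, m.zero_le, Fin.elim0, fun i => i.elim0, by simp⟩

lemma mono {m' : ℕ} (h : IsProdOfReflections Γ m Q) (hm : m ≤ m') : IsProdOfReflections Γ m' Q :=
  let ⟨k, hk, g, hg, hQ⟩ := h
  ⟨k, hk.trans hm, g, hg, hQ⟩

lemma reflMatrix_mul {γ : Fin n → ℝ} (hγ : γ ∈ Γ) (hγ0 : γ ≠ 0) (h : IsProdOfReflections Γ m Q) :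
    IsProdOfReflections Γ (m + 1) (reflMatrix γ * Q) := by
  obtain ⟨k, hk, g, hg, rfl⟩ := h
  refine ⟨k + 1, by omega, Fin.cons γ g, Fin.cases ⟨hγ, hγ0⟩ hg, ?_⟩
  simp [List.ofFn_succ]

end IsProdOfReflections

lemma exists_reflMatrix_mul_mulVec_eq_self {Γ : AddSubgroup (Fin n → ℝ)}
    {Q : Matrix (Fin n) (Fin n) ℝ} (hQ : IsCoincidenceIsometry Γ Q) {F : Set (Fin n → ℝ)}
    (hfix : ∀ x ∈ F, Q *ᵥ x = x) {v : Fin n → ℝ} (hv : v ∈ Γ) (hQv : Q *ᵥ v ≠ v) :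
    ∃ γ ∈ Γ, γ ≠ 0 ∧ ∀ x ∈ insert v F, (reflMatrix γ * Q) *ᵥ x = x := by
  obtain ⟨k, hk, hkΓ⟩ := hQ.2.exists_nsmul_mem
  have hk' : (k : ℝ) ≠ 0 := Nat.cast_ne_zero.2 hk
  have hγ : (k : ℝ) • (Q *ᵥ v - v) ∈ Γ := by
    rw [smul_sub, Nat.cast_smul_eq_nsmul, Nat.cast_smul_eq_nsmul]
    exact sub_mem (hkΓ _ ⟨v, hv, rfl⟩) (AddSubgroup.nsmul_mem Γ hv k)
  refine ⟨_, hγ, smul_ne_zero hk' (sub_ne_zero.2 hQv), ?_⟩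
  rintro x (rfl | hx) <;> rw [reflMatrix_smul hk', ← mulVec_mulVec]
  · exact reflMatrix_sub_mulVec_self
      (dotProduct_mulVec_mulVec_of_mem_orthogonalGroup hQ.1 x x) hQv
  · rw [hfix x hx]
    apply reflMatrix_mulVec_of_dotProduct_eq_zero
    have hQvx := dotProduct_mulVec_mulVec_of_mem_orthogonalGroup hQ.1 v x
    rw [hfix x hx] at hQvx
    rw [sub_dotProduct, hQvx, sub_self]

theorem isProdOfReflections_of_mulVec_eq_self {Γ : AddSubgroup (Fin n → ℝ)}
    (hrefl : ∀ γ ∈ Γ, γ ≠ 0 → IsCoincidenceIsometry Γ (reflMatrix γ))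
    (L : List (Fin n → ℝ)) (hL : ∀ v ∈ L, v ∈ Γ) {F : Set (Fin n → ℝ)}
    (hspan : Submodule.span ℝ (F ∪ {x | x ∈ L}) = ⊤) {Q : Matrix (Fin n) (Fin n) ℝ}
    (hQ : IsCoincidenceIsometry Γ Q) (hfix : ∀ x ∈ F, Q *ᵥ x = x) :
    IsProdOfReflections Γ L.length Q := by
  induction L generalizing F Q with
  | nil =>
    rw [eq_one_of_mulVec_eq_self (by simpa using hspan) hfix]
    exact .one 0
  | cons v L ih =>
    have hv : v ∈ Γ := hL v (List.mem_cons_self ..)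
    have hL' : ∀ w ∈ L, w ∈ Γ := fun w hw => hL w (List.mem_cons_of_mem v hw)
    have hspan' : Submodule.span ℝ (insert v F ∪ {x | x ∈ L}) = ⊤ := by
      convert hspan using 2
      ext x
      simp only [Set.mem_union, Set.mem_insert_iff, Set.mem_ofPred_eq, List.mem_cons]
      tauto
    by_cases hQv : Q *ᵥ v = v
    · refine (ih hL' hspan' hQ ?_).mono (Nat.le_succ _)
      rintro x (rfl | hx)
      exacts [hQv, hfix x hx]
    · obtain ⟨γ, hγ, hγ0, hγfix⟩ := exists_reflMatrix_mul_mulVec_eq_self hQ hfix hv hQv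
      have hRQ := ih hL' hspan' ((hrefl γ hγ hγ0).mul hQ) hγfix
      have hRRQ := hRQ.reflMatrix_mul hγ hγ0
      rwa [← mul_assoc, reflMatrix_mul_self hγ0, one_mul] at hRRQ

lemma IsSBasisOf.apply_mem {S : Subring ℝ} {b : Fin n → (Fin n → ℝ)} {Γ : AddSubgroup (Fin n → ℝ)}
    (hb : IsSBasisOf S b Γ) (i : Fin n) : b i ∈ Γ := by
  refine (hb.2.2 _).2 ⟨Pi.single i 1, fun j => ?_, by simp⟩
  rcases eq_or_ne j i with rfl | hji
  · simp
  · simp [hji]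

theorem stmt13_general {n : ℕ} (S : Subring ℝ)
    (Γ : AddSubgroup (Fin n → ℝ)) (b : Fin n → (Fin n → ℝ)) (hb : IsSBasisOf S b Γ)
    (hrefl : ∀ γ ∈ Γ, γ ≠ 0 → IsCoincidenceIsometry Γ (reflMatrix γ)) :
    ∀ Q : Matrix (Fin n) (Fin n) ℝ, IsCoincidenceIsometry Γ Q →
      IsProdOfAtMostNCoincReflections Γ Q := by
  intro Q hQ
  have hbΓ : ∀ v ∈ List.ofFn b, v ∈ Γ := by
    simp only [List.mem_ofFn, forall_exists_index]
    rintro _ i rfl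
    exact hb.apply_mem i
  have hspan : Submodule.span ℝ (∅ ∪ {x | x ∈ List.ofFn b}) = ⊤ := by
    rw [Set.empty_union, ← hb.2.1]
    congr 1
    ext x
    simp [List.mem_ofFn]
  have hQ := isProdOfReflections_of_mulVec_eq_self hrefl _ hbΓ hspan hQ (by simp)
  rwa [List.length_ofFn] at hQ

theorem stmt13 {n : ℕ} (S : Subring ℝ) (hS : Module.Finite ℤ S)
    (Γ : AddSubgroup (Fin n → ℝ)) (b : Fin n → (Fin n → ℝ)) (hb : IsSBasisOf S b Γ)
    (hrefl : ∀ γ ∈ Γ, γ ≠ 0 → IsCoincidenceIsometry Γ (reflMatrix γ)) :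
    ∀ Q : Matrix (Fin n) (Fin n) ℝ, IsCoincidenceIsometry Γ Q →
      IsProdOfAtMostNCoincReflections Γ Q :=
  stmt13_general S Γ b hb hrefl
end
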